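/- Let S_q(n,k) be defined by the recursion S_q(n,k)=0 for k<0 or k>n, S_q(0,0)=1, and S_q(n+1,k)=S_q(n,k-1)+[k]_q S_q(n,k). Then S_q(n,k) = h_{n-k}([0]_q,[1]_q,...,[k]_q), the complete homogeneous symmetric polynomial of degree n-k evaluated at the q-integers [0]_q,...,[k]_q. -/
import Mathlib


/-- Complete homogeneous symmetric polynomial of degree `m` in `a 0, ..., a k`. -/
def hsym {F : Type*} [CommRing F] (m k : ℕ) (a : ℕ → F) : F :=
  ∑ s ∈ (Finset.univ : Finset (Fin (k+1))).sym m,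
    ((s : Multiset (Fin (k+1))).map (fun i => a i.1)).prod

/-- The q-integer `[m]_q = 1 + q + ... + q^(m-1)`. -/
def qint {R : Type*} [CommRing R] (q : R) (m : ℕ) : R :=
  ∑ i ∈ Finset.range m, q ^ i

lemma hsym_zero {F : Type*} [CommRing F] (k : ℕ) (a : ℕ → F) : hsym 0 k a = 1 := by
  rw [hsym, Finset.sym_zero, Finset.sum_singleton]
  rfl

lemma hsym_rec {F : Type*} [CommRing F] (m k : ℕ) (a : ℕ → F) :
    hsym (m+1) (k+1) a = hsym (m+1) k a + a (k+1) * hsym m (k+1) a := by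
  classical
  unfold hsym
  set e : Fin (k+2) := Fin.last (k+1) with he
  rw [← Finset.sum_filter_add_sum_filter_not ((Finset.univ : Finset (Fin (k+2))).sym (m+1))
      (fun t => e ∈ t)]
  rw [add_comm]
  congr 1
  · -- t not containing e ↔ image of castSucc
    apply Finset.sum_nbij' (i := fun t => Sym.map (fun i : Fin (k+2) => (⟨min i.1 k, by omega⟩ : Fin (k+1))) t)
      (j := fun t => Sym.map Fin.castSucc t)
    · intro t ht
      exact Finset.mem_sym_iff.2 (fun x _ => Finset.mem_univ x)
    · intro t ht
      refine Finset.mem_filter.2 ⟨Finset.mem_sym_iff.2 (fun x _ => Finset.mem_univ x), ?_⟩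
      rw [Sym.mem_map]
      rintro ⟨i, -, hcast⟩
      have : (Fin.castSucc i).1 = (Fin.last (k+1)).1 := by rw [hcast]
      simp [Fin.castSucc, Fin.castAdd, Fin.castLE, Fin.last] at this
      omega
    · intro t ht
      simp only [Finset.mem_filter] at ht
      rw [Sym.map_map]
      rw [show Sym.map (Fin.castSucc ∘ fun i : Fin (k+2) => (⟨min i.1 k, by omega⟩ : Fin (k+1))) t
          = Sym.map id t from Sym.map_congr ?_, Sym.map_id]
      intro x hx
      have hxe : x ≠ e := fun h => ht.2 (h ▸ hx)
      have : x.1 < k + 1 := by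
        rcases Nat.lt_or_ge x.1 (k+1) with h | h
        · exact h
        · exact absurd (Fin.ext (by simp [he, Fin.last]; omega)) hxe
      simp [Fin.castSucc, Fin.castAdd, Fin.castLE, Fin.ext_iff]
      omega
    · intro t ht
      rw [Sym.map_map]
      rw [show Sym.map ((fun i : Fin (k+2) => (⟨min i.1 k, by omega⟩ : Fin (k+1))) ∘ Fin.castSucc) t
          = Sym.map id t from Sym.map_congr ?_, Sym.map_id]
      intro x hx
      simp [Fin.castSucc, Fin.castAdd, Fin.castLE, Fin.ext_iff]
      omega
    · intro t ht
      rw [Sym.coe_map, Multiset.map_map]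
      refine congrArg Multiset.prod (Multiset.map_congr rfl ?_).symm
      intro x hx
      simp only [Finset.mem_filter] at ht
      have hxe : x ≠ e := fun h => ht.2 (h ▸ hx)
      have : x.1 < k + 1 := by
        rcases Nat.lt_or_ge x.1 (k+1) with h | h
        · exact h
        · exact absurd (Fin.ext (by simp [he, Fin.last]; omega)) hxe
      simp only [Function.comp_apply]
      congr 1
      omega
  · -- t containing e: image of cons e
    have himg : Finset.filter (fun t => e ∈ t) ((Finset.univ : Finset (Fin (k+2))).sym (m+1))
        = Finset.image (Sym.cons e) ((Finset.univ : Finset (Fin (k+2))).sym m) := by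
      ext t
      simp only [Finset.mem_filter, Finset.mem_image, Finset.mem_sym_iff]
      constructor
      · rintro ⟨-, hmem⟩
        exact ⟨t.erase e hmem, fun x _ => Finset.mem_univ x, Sym.cons_erase hmem⟩
      · rintro ⟨u, -, rfl⟩
        exact ⟨fun x _ => Finset.mem_univ x, Sym.mem_cons_self e u⟩
    rw [himg, Finset.sum_image (fun u _ v _ h => (Sym.cons_inj_right e u v).1 h)]
    rw [Finset.mul_sum]
    apply Finset.sum_congr rfl
    intro u hu
    rw [Sym.coe_cons, Multiset.map_cons, Multiset.prod_cons, he, Fin.val_last]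

lemma hsym_zerovar {F : Type*} [CommRing F] (m : ℕ) (a : ℕ → F) :
    hsym m 0 a = a 0 ^ m := by
  induction m with
  | zero => simpa using hsym_zero 0 a
  | succ m ih =>
    unfold hsym at *
    rw [pow_succ, ← ih]
    have himg : (Finset.univ : Finset (Fin 1)).sym (m+1)
        = Finset.image (Sym.cons 0) ((Finset.univ : Finset (Fin 1)).sym m) := by
      ext t
      simp only [Finset.mem_image, Finset.mem_sym_iff]
      constructor
      · intro h
        obtain ⟨x, hx⟩ := Sym.exists_mem t
        have h0 : (0 : Fin 1) ∈ t := by rwa [Subsingleton.elim (0 : Fin 1) x]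
        exact ⟨t.erase 0 h0, fun x _ => Finset.mem_univ x, Sym.cons_erase h0⟩
      · rintro ⟨u, -, rfl⟩
        exact fun x _ => Finset.mem_univ x
    rw [himg, Finset.sum_image (fun u _ v _ h => (Sym.cons_inj_right 0 u v).1 h)]
    rw [Finset.sum_mul]
    apply Finset.sum_congr rfl
    intro u hu
    rw [Sym.coe_cons, Multiset.map_cons, Multiset.prod_cons, Fin.val_zero, mul_comm]

theorem stmt3 {R : Type*} [CommRing R] (q : R) (S : ℕ → ℤ → R)
    (hbound : ∀ (n : ℕ) (k : ℤ), (k < 0 ∨ (n : ℤ) < k) → S n k = 0)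
    (hinit : S 0 0 = 1)
    (hrec : ∀ (n : ℕ) (k : ℤ), 0 ≤ k →
      S (n+1) k = S n (k-1) + qint q k.toNat * S n k) :
    ∀ n k : ℕ, k ≤ n → S n k = hsym (n - k) k (fun i => qint q i) := by
  intro n
  induction n with
  | zero =>
    intro k hk
    obtain rfl : k = 0 := Nat.le_zero.1 hk
    rw [Nat.cast_zero, hinit, Nat.sub_zero, hsym_zero]
  | succ n IH =>
    intro k hk
    match k with
    | 0 =>
      have h1 := hrec n 0 le_rfl
      have h2 : S n (-1) = 0 := hbound n (-1) (Or.inl (by norm_num))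
      have hq : qint q 0 = 0 := by simp [qint]
      rw [Nat.cast_zero, h1]
      rw [show (0:ℤ) - 1 = -1 by ring, h2, show (0:ℤ).toNat = 0 from rfl, hq,
        zero_add, zero_mul, Nat.sub_zero, hsym_zerovar]
      rw [hq, zero_pow (Nat.succ_ne_zero n)]
    | (k+1) =>
      have h1 := hrec n ((k:ℤ)+1) (by positivity)
      have hcast : ((k+1 : ℕ) : ℤ) = (k:ℤ)+1 := by push_cast; ring
      have htn : ((k:ℤ)+1).toNat = k+1 := by omega
      rcases Nat.lt_or_ge n (k+1) with hgt | hle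
      · -- k+1 = n+1
        obtain rfl : k = n := by omega
        have h2 : S k ((k:ℤ)+1) = 0 := hbound k ((k:ℤ)+1) (Or.inr (by omega))
        have h3 : S k ((k:ℤ)+1-1) = 1 := by
          rw [show ((k:ℤ)+1-1) = (k:ℕ) by push_cast; ring]
          rw [IH k le_rfl, Nat.sub_self, hsym_zero]
        rw [hcast, h1, h2, h3, mul_zero, add_zero, Nat.sub_self, hsym_zero]
      · -- k+1 ≤ n
        have h2 : S n ((k:ℤ)+1-1) = hsym (n-k) k (fun i => qint q i) := by
          rw [show ((k:ℤ)+1-1) = (k:ℕ) by push_cast; ring]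
          exact IH k (by omega)
        have h3 : S n ((k:ℤ)+1) = hsym (n-(k+1)) (k+1) (fun i => qint q i) := by
          rw [← hcast]; exact IH (k+1) hle
        rw [hcast, h1, h2, h3, htn]
        rw [show n + 1 - (k+1) = (n - (k+1)) + 1 by omega,
          show n - k = (n - (k+1)) + 1 by omega, hsym_rec]
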